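/- Let R be a commutative ring and u, v ∈ R. Define polynomials P_ℓ ∈ R[X] by P_0 = 1, P_1 = X, P_2 = X² − (u + v), and P_{ℓ+1} = X·P_ℓ − v·P_{ℓ−1} for ℓ ≥ 2. Then for every integer ℓ ≥ 1, P_ℓ = X^ℓ − ∑_{r=1}^{⌊ℓ/2⌋} (α_{r,ℓ}·u + β_{r,ℓ}·v)·v^{r−1}·X^{ℓ−2r}, where the integers α_{r,ℓ}, β_{r,ℓ} are mapped into R by the canonical ring homomorphism ℤ → R. (This is the algebraic content of the closed-form expression of the half-integral weight Hecke operator T_{p^{2ℓ}} as a polynomial in T_{p²}, with u = χ(p²)p^{k−3} and v = χ(p²)p^{k−2}.) -/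

import Mathlib

open Polynomial

/-- Binomial coefficient C(n, j) for integers, taken to be 0 when j < 0 or j > n. -/
def Cb (n j : ℤ) : ℤ := if 0 ≤ j ∧ j ≤ n then (n.toNat).choose j.toNat else 0

/-- The sequence A_{r,ℓ}(m): A_{1,ℓ}(m) = 1 and, for r ≥ 2,
    A_{r,ℓ}(m) = A_{r−1,ℓ}(m) − C(ℓ−2(r−1), m−(r−1))·A_{r−1,ℓ}(r−1). -/
def Aseq (ℓ : ℕ) : ℕ → ℤ → ℤ
  | 0, _ => 1
  | 1, _ => 1
  | (r + 2), m =>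
      Aseq ℓ (r + 1) m
        - Cb ((ℓ : ℤ) - 2 * (r + 1)) (m - (r + 1)) * Aseq ℓ (r + 1) ((r : ℤ) + 1)

/-- The sequence B_{r,ℓ}(m): B_{1,ℓ}(m) = C(ℓ,m) − 1 and, for r ≥ 2,
    B_{r,ℓ}(m) = B_{r−1,ℓ}(m) − C(ℓ−2(r−1), m−(r−1))·B_{r−1,ℓ}(r−1). -/
def Bseq (ℓ : ℕ) : ℕ → ℤ → ℤ
  | 0, m => Cb (ℓ : ℤ) m - 1
  | 1, m => Cb (ℓ : ℤ) m - 1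
  | (r + 2), m =>
      Bseq ℓ (r + 1) m
        - Cb ((ℓ : ℤ) - 2 * (r + 1)) (m - (r + 1)) * Bseq ℓ (r + 1) ((r : ℤ) + 1)

/-- α_{r,ℓ} = A_{r,ℓ}(r). -/
def alphaSeq (ℓ r : ℕ) : ℤ := Aseq ℓ r r

/-- β_{r,ℓ} = B_{r,ℓ}(r). -/
def betaSeq (ℓ r : ℕ) : ℤ := Bseq ℓ r r

/-- The polynomials P_ℓ : P_0 = 1, P_1 = X, P_2 = X² − (u+v),
    P_{ℓ+1} = X·P_ℓ − v·P_{ℓ−1} for ℓ ≥ 2. -/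
noncomputable def Ppoly {R : Type*} [CommRing R] (u v : R) : ℕ → Polynomial R
  | 0 => 1
  | 1 => X
  | 2 => X ^ 2 - C (u + v)
  | (ℓ + 3) => X * Ppoly u v (ℓ + 2) - C v * Ppoly u v (ℓ + 1)

/-!
Put `Q_0 = 1`, `Q_1 = X`, `Q_{n+2} = X Q_{n+1} - v Q_n`. Then `P_{n+2} = Q_{n+2} - u Q_n` and
`Q_n = ∑_t (-1)^t C(n-t, t) v^t X^(n-2t)`, so the theorem amounts to
`α_{r,ℓ} = (-1)^(r-1) C(ℓ-1-r, r-1)` and `β_{r,ℓ} = -(-1)^r C(ℓ-r, r)` for `1 ≤ r ≤ ℓ/2`.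
Unrolled, the recursions for `A` and `B` say that `α_{·,ℓ}` and `β_{·,ℓ}` solve unitriangular
systems with matrix `C(ℓ-2s, r-s)`. The closed forms solve the same systems by the identity
`∑_{t ≤ k} (-1)^t C(n-t, t) C(n-2t, k-t) = 1` for `k ≤ n`, read off from the coefficient of `X^k`
in `Q_n(1 + X)` at `v = X`, which is `1 + X + ⋯ + X^n`.
-/

/-- The Lucas polynomial `U_{n+1}(X, v)`. -/
noncomputable def Qpoly {R : Type*} [CommRing R] (v : R) : ℕ → R[X]
  | 0 => 1
  | 1 => X
  | (n + 2) => X * Qpoly v (n + 1) - C v * Qpoly v n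

def qCoeff (n t : ℕ) : ℤ := (-1) ^ t * ((n - t).choose t : ℤ)

section Coefficients

lemma qCoeff_zero_right (n : ℕ) : qCoeff n 0 = 1 := by simp [qCoeff]

lemma qCoeff_eq_zero {n t : ℕ} (h : n < 2 * t) : qCoeff n t = 0 := by
  simp [qCoeff, Nat.choose_eq_zero_of_lt (by omega : n - t < t)]

lemma qCoeff_succ_succ (n t : ℕ) :
    qCoeff (n + 2) (t + 1) = qCoeff (n + 1) (t + 1) - qCoeff n t := by
  rcases le_or_gt t n with h | h
  · rw [qCoeff, qCoeff, qCoeff, show n + 2 - (t + 1) = n - t + 1 by omega,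
      show n + 1 - (t + 1) = n - t by omega, Nat.choose_succ_succ]
    push_cast
    ring
  · rw [qCoeff_eq_zero (by omega), qCoeff_eq_zero (by omega), qCoeff_eq_zero (by omega)]
    simp

end Coefficients

section ClosedForm

variable {R : Type*} [CommRing R] (u v : R)

lemma Qpoly_add_two (n : ℕ) : Qpoly v (n + 2) = X * Qpoly v (n + 1) - C v * Qpoly v n := rfl

lemma Ppoly_eq_Qpoly_sub (n : ℕ) :
    Ppoly u v (n + 2) = Qpoly v (n + 2) - C u * Qpoly v n := by
  induction n using Nat.twoStepInduction with
  | zero => simp [Ppoly, Qpoly]; ring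
  | one => simp [Ppoly, Qpoly]; ring
  | more n ih₀ ih₁ =>
    have hP : Ppoly u v (n + 4) = X * Ppoly u v (n + 3) - C v * Ppoly u v (n + 2) := rfl
    have hQ₄ : Qpoly v (n + 4) = X * Qpoly v (n + 3) - C v * Qpoly v (n + 2) := rfl
    have hQ₃ : Qpoly v (n + 3) = X * Qpoly v (n + 2) - C v * Qpoly v (n + 1) := rfl
    show Ppoly u v (n + 4) = Qpoly v (n + 4) - C u * Qpoly v (n + 2)
    rw [hP, ih₀, show n + 3 = n + 1 + 2 from rfl, ih₁, hQ₄, hQ₃, Qpoly_add_two v n]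
    ring

noncomputable def qTerm (n t : ℕ) : R[X] := C ((qCoeff n t : R) * v ^ t) * X ^ (n - 2 * t)

lemma qTerm_eq_zero {n t : ℕ} (h : n < 2 * t) : qTerm v n t = 0 := by
  simp [qTerm, qCoeff_eq_zero h]

lemma qTerm_succ_succ (n t : ℕ) :
    qTerm v (n + 2) (t + 1) = X * qTerm v (n + 1) (t + 1) - C v * qTerm v n t := by
  rcases le_or_gt (2 * (t + 1)) (n + 1) with h | h
  · rw [qTerm, qTerm, qTerm, qCoeff_succ_succ, show n + 2 - 2 * (t + 1) = n - 2 * t by omega,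
      show n - 2 * t = n + 1 - 2 * (t + 1) + 1 by omega]
    push_cast
    simp only [map_sub, map_mul, map_pow]
    ring
  · rw [qTerm_eq_zero v (by omega : n + 1 < 2 * (t + 1)), qTerm, qTerm, qCoeff_succ_succ,
      qCoeff_eq_zero (by omega : n + 1 < 2 * (t + 1)),
      show n + 2 - 2 * (t + 1) = n - 2 * t by omega]
    simp only [zero_sub, Int.cast_neg, map_neg, map_mul, map_pow]
    ring

lemma sum_qTerm_of_lt_two {n N : ℕ} (hn : n < 2) (hN : 0 < N) :
    ∑ t ∈ Finset.range N, qTerm v n t = X ^ n := by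
  rw [Finset.sum_eq_single_of_mem 0 (Finset.mem_range.2 hN)
    (fun t _ ht => qTerm_eq_zero v (by omega))]
  simp [qTerm, qCoeff_zero_right]

lemma Qpoly_eq_sum_qTerm {n N : ℕ} (hN : n < 2 * N) :
    Qpoly v n = ∑ t ∈ Finset.range N, qTerm v n t := by
  induction n using Nat.strong_induction_on generalizing N with
  | _ n ih =>
  match n with
  | 0 => rw [sum_qTerm_of_lt_two v (by omega) (by omega)]; rfl
  | 1 => rw [sum_qTerm_of_lt_two v (by omega) (by omega)]; simp [Qpoly]
  | n + 2 =>
    obtain ⟨M, rfl⟩ : ∃ M, N = M + 1 := ⟨N - 1, by omega⟩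
    have last : qTerm v n M = 0 := qTerm_eq_zero v (by omega)
    rw [Qpoly_add_two, ih (n + 1) (by omega) (N := M + 1) (by omega), ih n (by omega) (N := M + 1)
      (by omega), Finset.sum_range_succ (qTerm v n) M, last, add_zero, Finset.sum_range_succ',
      Finset.sum_range_succ']
    simp only [qTerm_succ_succ, Finset.sum_sub_distrib, ← Finset.mul_sum]
    simp [qTerm, qCoeff_zero_right]
    ring

lemma Qpoly_eq_X_pow_add_sum (ℓ : ℕ) :
    Qpoly v ℓ
      = X ^ ℓ + ∑ r ∈ Finset.Icc 1 (ℓ / 2), C ((qCoeff ℓ r : R) * v ^ r) * X ^ (ℓ - 2 * r) := by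
  rw [Qpoly_eq_sum_qTerm v (N := ℓ / 2 + 1) (by omega), Finset.range_eq_Ico,
    Finset.sum_eq_sum_Ico_succ_bot (by omega), Finset.Ico_add_one_right_eq_Icc]
  simp [qTerm, qCoeff_zero_right]

lemma C_mul_Qpoly_eq_sum (n : ℕ) :
    C u * Qpoly v n = ∑ r ∈ Finset.Icc 1 ((n + 2) / 2),
      C ((qCoeff n (r - 1) : R) * u * v ^ (r - 1)) * X ^ (n + 2 - 2 * r) := by
  rw [Qpoly_eq_sum_qTerm v (N := (n + 2) / 2) (by omega), Finset.mul_sum, Finset.range_eq_Ico,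
    ← Finset.Ico_add_one_right_eq_Icc, ← Finset.sum_Ico_add' _ 0 _ 1]
  refine Finset.sum_congr rfl fun t _ => ?_
  rw [qTerm, Nat.add_sub_cancel, show n + 2 - 2 * (t + 1) = n - 2 * t by omega]
  simp only [map_mul, map_pow]
  ring

end ClosedForm

section Identity

/-- The characteristic roots of `y² - (1 + X) y + X` are `1` and `X`, so with `v = X` the
polynomial `Q_n` becomes `(X^(n+1) - 1)/(X - 1)` at `1 + X`. -/
lemma Qpoly_X_eval_one_add_X (n : ℕ) :
    (Qpoly (X : ℤ[X]) n).eval (1 + X) = ∑ i ∈ Finset.range (n + 1), X ^ i := by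
  induction n using Nat.twoStepInduction with
  | zero => simp [Qpoly]
  | one => simp [Qpoly, Finset.sum_range_succ]
  | more n ih₀ ih₁ =>
    rw [Qpoly_add_two, eval_sub, eval_mul, eval_mul, eval_X, eval_C, ih₀, ih₁,
      Finset.sum_range_succ _ (n + 2), Finset.sum_range_succ _ (n + 1)]
    ring

lemma coeff_intCast_mul_X_pow_mul_one_add_X_pow (q : ℤ) (t m k : ℕ) :
    ((q : ℤ[X]) * X ^ t * (1 + X) ^ m).coeff k = if t ≤ k then q * m.choose (k - t) else 0 := by
  rw [mul_assoc, ← C_eq_intCast, coeff_C_mul, coeff_X_pow_mul', coeff_one_add_X_pow]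
  split_ifs <;> simp

lemma sum_qCoeff_mul_choose {n k : ℕ} (hk : k ≤ n) :
    ∑ t ∈ Finset.range (k + 1), qCoeff n t * ((n - 2 * t).choose (k - t) : ℤ) = 1 := by
  have h := congrArg (coeff · k) (Qpoly_X_eval_one_add_X n)
  rw [Qpoly_eq_sum_qTerm (X : ℤ[X]) (N := n + 1) (by omega)] at h
  simp only [qTerm, eval_finsetSum, eval_mul, eval_C, eval_pow, eval_X, finsetSum_coeff,
    coeff_X_pow, coeff_intCast_mul_X_pow_mul_one_add_X_pow, Finset.sum_ite_eq,
    Finset.mem_range] at h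
  rw [← Finset.sum_filter, if_pos (by omega)] at h
  rwa [show {t ∈ Finset.range (n + 1) | t ≤ k} = Finset.range (k + 1) by ext; simp; omega] at h

end Identity

section Sequences

lemma Cb_natCast (n j : ℕ) : Cb n j = n.choose j := by
  unfold Cb
  split_ifs
  · simp
  · rw [Nat.choose_eq_zero_of_lt (by omega), Nat.cast_zero]

lemma Cb_sub_natCast {ℓ r s : ℕ} (h : s < r) :
    Cb ((ℓ : ℤ) - 2 * s) ((r : ℤ) - s) = (ℓ - 2 * s).choose (r - s) := by
  unfold Cb
  split_ifs
  · rw [show ((ℓ : ℤ) - 2 * s).toNat = ℓ - 2 * s by omega,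
      show ((r : ℤ) - s).toNat = r - s by omega]
  · rw [Nat.choose_eq_zero_of_lt (by omega), Nat.cast_zero]

lemma Aseq_succ (ℓ r : ℕ) (m : ℤ) :
    Aseq ℓ (r + 1) m = 1 - ∑ s ∈ Finset.Ico 1 (r + 1), Cb (ℓ - 2 * s) (m - s) * alphaSeq ℓ s := by
  induction r with
  | zero => simp [Aseq]
  | succ r ih =>
    rw [Aseq, ih, Finset.sum_Ico_succ_top (by omega : 1 ≤ r + 1), alphaSeq]
    push_cast
    ring

lemma Bseq_succ (ℓ r : ℕ) (m : ℤ) :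
    Bseq ℓ (r + 1) m
      = Cb ℓ m - 1 - ∑ s ∈ Finset.Ico 1 (r + 1), Cb (ℓ - 2 * s) (m - s) * betaSeq ℓ s := by
  induction r with
  | zero => simp [Bseq]
  | succ r ih =>
    rw [Bseq, ih, Finset.sum_Ico_succ_top (by omega : 1 ≤ r + 1), betaSeq]
    push_cast
    ring

lemma alphaSeq_eq_one_sub_sum {ℓ r : ℕ} (hr : 1 ≤ r) :
    alphaSeq ℓ r = 1 - ∑ s ∈ Finset.Ico 1 r, ((ℓ - 2 * s).choose (r - s) : ℤ) * alphaSeq ℓ s := by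
  obtain ⟨r, rfl⟩ := Nat.exists_eq_add_of_le' hr
  rw [alphaSeq, Aseq_succ]
  refine congrArg _ (Finset.sum_congr rfl fun s hs => ?_)
  rw [Cb_sub_natCast (Finset.mem_Ico.1 hs).2]

lemma betaSeq_eq_sub_sum {ℓ r : ℕ} (hr : 1 ≤ r) :
    betaSeq ℓ r
      = ℓ.choose r - 1 - ∑ s ∈ Finset.Ico 1 r, ((ℓ - 2 * s).choose (r - s) : ℤ) * betaSeq ℓ s := by
  obtain ⟨r, rfl⟩ := Nat.exists_eq_add_of_le' hr
  rw [betaSeq, Bseq_succ, Cb_natCast]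
  refine congrArg _ (Finset.sum_congr rfl fun s hs => ?_)
  rw [Cb_sub_natCast (Finset.mem_Ico.1 hs).2]

lemma eq_of_triangular {R : Type*} [Ring R] {K : ℕ → ℕ → R} {c x y : ℕ → R} {N : ℕ}
    (hx : ∀ r, 1 ≤ r → r ≤ N → x r = c r - ∑ s ∈ Finset.Ico 1 r, K r s * x s)
    (hy : ∀ r, 1 ≤ r → r ≤ N → y r = c r - ∑ s ∈ Finset.Ico 1 r, K r s * y s) :
    ∀ r, 1 ≤ r → r ≤ N → x r = y r := by
  intro r
  induction r using Nat.strong_induction_on with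
  | _ r ih =>
    intro h1 hN
    rw [hx r h1 hN, hy r h1 hN]
    refine congrArg _ (Finset.sum_congr rfl fun s hs => ?_)
    rw [Finset.mem_Ico] at hs
    rw [ih s hs.2 hs.1 (by omega)]

lemma qCoeff_sub_two_eq_one_sub_sum {ℓ r : ℕ} (h1 : 1 ≤ r) (h2 : 2 * r ≤ ℓ) :
    qCoeff (ℓ - 2) (r - 1)
      = 1 - ∑ s ∈ Finset.Ico 1 r, ((ℓ - 2 * s).choose (r - s) : ℤ) * qCoeff (ℓ - 2) (s - 1) := by
  obtain ⟨k, rfl⟩ := Nat.exists_eq_add_of_le' h1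
  have h := sum_qCoeff_mul_choose (n := ℓ - 2) (k := k) (by omega)
  rw [Finset.sum_range_succ, Nat.sub_self, Nat.choose_zero_right, Nat.cast_one, mul_one] at h
  rw [Finset.sum_Ico_eq_sum_range, Nat.add_sub_cancel]
  have shift : ∀ t ∈ Finset.range k,
      ((ℓ - 2 * (1 + t)).choose (k + 1 - (1 + t)) : ℤ) * qCoeff (ℓ - 2) (1 + t - 1)
        = qCoeff (ℓ - 2) t * ((ℓ - 2 - 2 * t).choose (k - t) : ℤ) := by
    intro t _
    rw [show ℓ - 2 * (1 + t) = ℓ - 2 - 2 * t by omega, show k + 1 - (1 + t) = k - t by omega,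
      show 1 + t - 1 = t by omega, mul_comm]
  rw [Finset.sum_congr rfl shift]
  linarith

lemma neg_qCoeff_eq_sub_sum {ℓ r : ℕ} (h1 : 1 ≤ r) (h2 : 2 * r ≤ ℓ) :
    -qCoeff ℓ r
      = ℓ.choose r - 1 - ∑ s ∈ Finset.Ico 1 r, ((ℓ - 2 * s).choose (r - s) : ℤ) * -qCoeff ℓ s := by
  have h := sum_qCoeff_mul_choose (n := ℓ) (k := r) (by omega)
  rw [Finset.range_eq_Ico, Finset.sum_eq_sum_Ico_succ_bot (by omega), Finset.sum_Ico_succ_top h1,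
    Nat.sub_self, Nat.choose_zero_right, qCoeff_zero_right] at h
  simp only [mul_neg, Finset.sum_neg_distrib, mul_comm _ (qCoeff ℓ _)]
  simp only [Nat.mul_zero, Nat.sub_zero, one_mul, Nat.cast_one, mul_one] at h
  linarith

lemma alphaSeq_eq_qCoeff {ℓ r : ℕ} (h1 : 1 ≤ r) (h2 : 2 * r ≤ ℓ) :
    alphaSeq ℓ r = qCoeff (ℓ - 2) (r - 1) :=
  eq_of_triangular (N := ℓ / 2) (fun _ h _ => alphaSeq_eq_one_sub_sum h)
    (fun _ h _ => qCoeff_sub_two_eq_one_sub_sum h (by omega)) r h1 (by omega)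

lemma betaSeq_eq_neg_qCoeff {ℓ r : ℕ} (h1 : 1 ≤ r) (h2 : 2 * r ≤ ℓ) :
    betaSeq ℓ r = -qCoeff ℓ r :=
  eq_of_triangular (N := ℓ / 2) (fun _ h _ => betaSeq_eq_sub_sum h)
    (fun _ h _ => neg_qCoeff_eq_sub_sum h (by omega)) r h1 (by omega)

end Sequences

theorem Ppoly_closed_form_general {R : Type*} [CommRing R] (u v : R) (ℓ : ℕ) :
    Ppoly u v ℓ
      = X ^ ℓ
        - ∑ r ∈ Finset.Icc 1 (ℓ / 2),
            C ((alphaSeq ℓ r : R) * u + (betaSeq ℓ r : R) * v) * C v ^ (r - 1)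
              * X ^ (ℓ - 2 * r) := by
  obtain h | ⟨n, rfl⟩ : ℓ < 2 ∨ ∃ n, ℓ = n + 2 :=
    (Nat.lt_or_ge ℓ 2).imp_right fun h => ⟨ℓ - 2, by omega⟩
  · interval_cases ℓ <;> simp [Ppoly]
  have term : ∀ r ∈ Finset.Icc 1 ((n + 2) / 2),
      C ((alphaSeq (n + 2) r : R) * u + (betaSeq (n + 2) r : R) * v) * C v ^ (r - 1)
          * X ^ (n + 2 - 2 * r)
        = C ((qCoeff n (r - 1) : R) * u * v ^ (r - 1)) * X ^ (n + 2 - 2 * r)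
          - C ((qCoeff (n + 2) r : R) * v ^ r) * X ^ (n + 2 - 2 * r) := by
    intro r hr
    rw [Finset.mem_Icc] at hr
    rw [alphaSeq_eq_qCoeff hr.1 (by omega), betaSeq_eq_neg_qCoeff hr.1 (by omega),
      Nat.add_sub_cancel, ← Nat.sub_add_cancel hr.1]
    simp only [map_add, map_mul, map_pow, Int.cast_neg, map_neg, Nat.add_sub_cancel]
    ring
  rw [Ppoly_eq_Qpoly_sub, Qpoly_eq_X_pow_add_sum, C_mul_Qpoly_eq_sum, Finset.sum_congr rfl term,
    Finset.sum_sub_distrib]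
  ring

/-- for every ℓ ≥ 1,
    P_ℓ = X^ℓ − ∑_{r=1}^{⌊ℓ/2⌋} (α_{r,ℓ}·u + β_{r,ℓ}·v)·v^{r−1}·X^{ℓ−2r}. -/
theorem Ppoly_closed_form {R : Type*} [CommRing R] (u v : R) (ℓ : ℕ) (hℓ : 1 ≤ ℓ) :
    Ppoly u v ℓ
      = X ^ ℓ
        - ∑ r ∈ Finset.Icc 1 (ℓ / 2),
            C ((alphaSeq ℓ r : R) * u + (betaSeq ℓ r : R) * v) * C v ^ (r - 1)
              * X ^ (ℓ - 2 * r) :=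
  Ppoly_closed_form_general u v ℓ
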